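/- arXiv:1812.09265 — 2 statements merged into one kernel-verified Lean document; each statement's English description precedes it below -/
import Mathlib

section
/- Let ν ≥ 1 be real and let t > 0, ε > 0. For R > 0 set G_μ(R) := ∫₀^∞ e^{−ερ} sin(Rρ) ρ^μ J_μ(tρ) dρ and H_ν(R) := ∫₀^∞ e^{−ερ} cos(Rρ) ρ^ν J_ν(tρ) dρ; all three integrals (for μ = ν−1 and μ = ν) converge absolutely. Then R ↦ G_{ν−1}(R) is differentiable on (0, ∞) and, for every R > 0, (1/R) G_{ν−1}′(R) = (1/t) G_ν(R) + (ε/(R t)) H_ν(R). (This is the exactly regularized form of the formal identity (1/R)(∂/∂R) ∫₀^∞ sin(Rρ) ρ^{ν−1} J_{ν−1}(tρ) dρ = (1/t) ∫₀^∞ sin(Rρ) ρ^ν J_ν(tρ) dρ, obtained by integration by parts using d/dρ[(tρ)^ν J_ν(tρ)] = t (tρ)^ν J_{ν−1}(tρ).) -/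
open MeasureTheory

/-- Bessel function of order `ν > -1/2`, via the Poisson-type integral representation. -/
noncomputable def besselJ (ν : ℝ) (x : ℝ) : ℝ :=
  (x / 2) ^ ν / (Real.Gamma (ν + 1 / 2) * Real.Gamma (1 / 2)) *
    ∫ s in (-1 : ℝ)..1, (1 - s ^ 2) ^ (ν - 1 / 2) * Real.cos (x * s)

/-- `G_μ(R) = ∫₀^∞ e^{-ερ} sin(Rρ) ρ^μ J_μ(tρ) dρ`. -/
noncomputable def G (ε t μ R : ℝ) : ℝ :=
  ∫ ρ in Set.Ioi (0 : ℝ), Real.exp (-ε * ρ) * Real.sin (R * ρ) * ρ ^ μ * besselJ μ (t * ρ)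

/-- `H_ν(R) = ∫₀^∞ e^{-ερ} cos(Rρ) ρ^ν J_ν(tρ) dρ`. -/
noncomputable def H (ε t ν R : ℝ) : ℝ :=
  ∫ ρ in Set.Ioi (0 : ℝ), Real.exp (-ε * ρ) * Real.cos (R * ρ) * ρ ^ ν * besselJ ν (t * ρ)

open Set Filter

noncomputable def gI (p x : ℝ) : ℝ := ∫ s in (-1:ℝ)..1, (1 - s ^ 2) ^ p * Real.cos (x * s)
noncomputable def gK (p x : ℝ) : ℝ := ∫ s in (-1:ℝ)..1, s * (1 - s ^ 2) ^ p * Real.sin (x * s)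
noncomputable def gA (p : ℝ) : ℝ := ∫ s in (-1:ℝ)..1, (1 - s ^ 2) ^ p

lemma measurable_rpow_const (q : ℝ) : Measurable fun x : ℝ => x ^ q :=
  measurable_of_continuousOn_compl_singleton 0 fun x hx =>
    (Real.continuousAt_rpow_const x q (Or.inl hx)).continuousWithinAt

lemma meas_g (p : ℝ) : Measurable fun s : ℝ => (1 - s ^ 2) ^ p :=
  (measurable_rpow_const p).comp (measurable_const.sub (measurable_id.pow_const 2))

lemma gInt {p : ℝ} (hp : -1 < p) :
    IntervalIntegrable (fun s : ℝ => (1 - s ^ 2) ^ p) volume (-1) 1 := by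
  set C : ℝ := max 1 (2 ^ p) with hC
  have hC1 : (1:ℝ) ≤ C := le_max_left _ _
  have hC0 : (0:ℝ) ≤ C := le_trans zero_le_one hC1
  have h1 : IntervalIntegrable (fun s : ℝ => C * (1 - s) ^ p + C * (1 + s) ^ p)
      volume (-1) 1 := by
    have i1 : IntervalIntegrable (fun s : ℝ => (1 - s) ^ p) volume (-1) 1 := by
      have := ((intervalIntegral.intervalIntegrable_rpow' (a := 0) (b := 2) hp).comp_sub_left 1).symm
      norm_num at this
      exact this
    have i2 : IntervalIntegrable (fun s : ℝ => (1 + s) ^ p) volume (-1) 1 := by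
      have := (intervalIntegral.intervalIntegrable_rpow' (a := 0) (b := 2) hp).comp_sub_right (-1)
      norm_num at this
      have h : (fun s : ℝ => (1 + s) ^ p) = fun s : ℝ => (s + 1) ^ p := by
        funext s; ring_nf
      rw [h]
      exact this
    exact (i1.const_mul C).add (i2.const_mul C)
  refine h1.mono_fun ((meas_g p).aestronglyMeasurable) ?_
  have huIoc : Set.uIoc (-1:ℝ) 1 = Set.Ioc (-1:ℝ) 1 := by
    rw [Set.uIoc_of_le]; norm_num
  rw [Filter.EventuallyLE, ae_restrict_iff' measurableSet_uIoc]
  filter_upwards with s hs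
  rw [huIoc] at hs
  have hs1 : 0 ≤ 1 - s := by linarith [hs.2]
  have hs2 : 0 < 1 + s := by linarith [hs.1]
  have hbase : (0:ℝ) ≤ 1 - s ^ 2 := by nlinarith [hs.1, hs.2]
  have key : (1 - s ^ 2) ^ p ≤ C * (1 - s) ^ p + C * (1 + s) ^ p := by
    have hfact : (1 - s ^ 2 : ℝ) = (1 - s) * (1 + s) := by ring
    rw [hfact, Real.mul_rpow hs1 hs2.le]
    rcases le_or_gt 0 s with h0 | h0
    · -- s ≥ 0 : (1+s)^p ≤ C
      have hb : (1 + s) ^ p ≤ C := by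
        rcases le_or_gt 0 p with hp0 | hp0
        · calc (1 + s) ^ p ≤ 2 ^ p := by
                apply Real.rpow_le_rpow hs2.le (by linarith [hs.2]) hp0
            _ ≤ C := le_max_right _ _
        · calc (1 + s) ^ p ≤ 1 ^ p :=
                Real.rpow_le_rpow_of_nonpos one_pos (by linarith) hp0.le
            _ ≤ C := by rw [Real.one_rpow]; exact hC1
      have : (1 - s) ^ p * (1 + s) ^ p ≤ (1 - s) ^ p * C :=
        mul_le_mul_of_nonneg_left hb (Real.rpow_nonneg hs1 p)
      have h2 : (0:ℝ) ≤ C * (1 + s) ^ p := mul_nonneg hC0 (Real.rpow_nonneg hs2.le p)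
      nlinarith
    · -- s < 0 : (1-s)^p ≤ C
      have hs1' : (0:ℝ) < 1 - s := by linarith
      have hb : (1 - s) ^ p ≤ C := by
        rcases le_or_gt 0 p with hp0 | hp0
        · calc (1 - s) ^ p ≤ 2 ^ p := by
                apply Real.rpow_le_rpow hs1 (by linarith [hs.1]) hp0
            _ ≤ C := le_max_right _ _
        · calc (1 - s) ^ p ≤ 1 ^ p :=
                Real.rpow_le_rpow_of_nonpos one_pos (by linarith) hp0.le
            _ ≤ C := by rw [Real.one_rpow]; exact hC1
      have : (1 - s) ^ p * (1 + s) ^ p ≤ C * (1 + s) ^ p :=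
        mul_le_mul_of_nonneg_right hb (Real.rpow_nonneg hs2.le p)
      have h2 : (0:ℝ) ≤ C * (1 - s) ^ p := mul_nonneg hC0 (Real.rpow_nonneg hs1 p)
      nlinarith
  have hnn : 0 ≤ (1 - s ^ 2) ^ p := Real.rpow_nonneg hbase p
  have hnn2 : 0 ≤ C * (1 - s) ^ p + C * (1 + s) ^ p := by
    have := mul_nonneg hC0 (Real.rpow_nonneg hs1 p)
    have := mul_nonneg hC0 (Real.rpow_nonneg hs2.le p)
    linarith
  simpa [Real.norm_eq_abs, abs_of_nonneg hnn, abs_of_nonneg hnn2] using key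

lemma uIoc_eq : Set.uIoc (-1:ℝ) 1 = Set.Ioc (-1:ℝ) 1 := by
  rw [Set.uIoc_of_le]; norm_num

lemma gInt_mul {p : ℝ} (hp : -1 < p) {h : ℝ → ℝ} (hm : Measurable h)
    (hb : ∀ s ∈ Set.Icc (-1:ℝ) 1, |h s| ≤ 1) :
    IntervalIntegrable (fun s => (1 - s ^ 2) ^ p * h s) volume (-1) 1 := by
  refine (gInt hp).mono_fun ((meas_g p).mul hm).aestronglyMeasurable ?_
  rw [Filter.EventuallyLE, ae_restrict_iff' measurableSet_uIoc]
  filter_upwards with s hs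
  rw [uIoc_eq] at hs
  have hbase : (0:ℝ) ≤ 1 - s ^ 2 := by nlinarith [hs.1, hs.2]
  have hg : 0 ≤ (1 - s ^ 2) ^ p := Real.rpow_nonneg hbase p
  have hb' := hb s ⟨hs.1.le, hs.2⟩
  have key : |(1 - s ^ 2) ^ p * h s| ≤ (1 - s ^ 2) ^ p := by
    rw [abs_mul, abs_of_nonneg hg]
    calc (1 - s ^ 2) ^ p * |h s| ≤ (1 - s ^ 2) ^ p * 1 :=
          mul_le_mul_of_nonneg_left hb' hg
      _ = (1 - s ^ 2) ^ p := mul_one _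
  show ‖(1 - s ^ 2) ^ p * h s‖ ≤ ‖(1 - s ^ 2) ^ p‖
  rw [Real.norm_eq_abs, Real.norm_eq_abs, abs_of_nonneg hg]
  exact key

lemma abs_int_le {p : ℝ} (hp : -1 < p) {h : ℝ → ℝ} (hm : Measurable h)
    (hb : ∀ s ∈ Set.Icc (-1:ℝ) 1, |h s| ≤ 1) :
    |∫ s in (-1:ℝ)..1, (1 - s ^ 2) ^ p * h s| ≤ gA p := by
  have h1 : (-1:ℝ) ≤ 1 := by norm_num
  calc |∫ s in (-1:ℝ)..1, (1 - s ^ 2) ^ p * h s|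
      ≤ ∫ s in (-1:ℝ)..1, |(1 - s ^ 2) ^ p * h s| :=
        intervalIntegral.abs_integral_le_integral_abs h1
    _ ≤ gA p := by
        refine intervalIntegral.integral_mono_on h1 ((gInt_mul hp hm hb).abs) (gInt hp) ?_
        intro s hs
        have hbase : (0:ℝ) ≤ 1 - s ^ 2 := by nlinarith [hs.1, hs.2]
        have hg : 0 ≤ (1 - s ^ 2) ^ p := Real.rpow_nonneg hbase p
        rw [abs_mul, abs_of_nonneg hg]
        calc (1 - s ^ 2) ^ p * |h s| ≤ (1 - s ^ 2) ^ p * 1 :=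
              mul_le_mul_of_nonneg_left (hb s hs) hg
          _ = (1 - s ^ 2) ^ p := mul_one _

lemma abs_gI_le {p : ℝ} (hp : -1 < p) (x : ℝ) : |gI p x| ≤ gA p :=
  abs_int_le hp (Real.measurable_cos.comp (measurable_id.const_mul x))
    (fun s _ => Real.abs_cos_le_one _)

lemma abs_gK_le {p : ℝ} (hp : -1 < p) (x : ℝ) : |gK p x| ≤ gA p := by
  have : gK p x = ∫ s in (-1:ℝ)..1, (1 - s ^ 2) ^ p * (s * Real.sin (x * s)) := by
    unfold gK; congr 1; funext s; ring
  rw [this]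
  refine abs_int_le hp (measurable_id.mul
    (Real.measurable_sin.comp (measurable_id.const_mul x))) ?_
  intro s hs
  rw [abs_mul]
  have h1 : |s| ≤ 1 := abs_le.2 ⟨hs.1, hs.2⟩
  have h2 : |Real.sin (x * s)| ≤ 1 := Real.abs_sin_le_one _
  calc |s| * |Real.sin (x * s)| ≤ 1 * 1 :=
        mul_le_mul h1 h2 (abs_nonneg _) zero_le_one
    _ = 1 := one_mul 1

lemma gA_nonneg {p : ℝ} : 0 ≤ gA p := by
  refine intervalIntegral.integral_nonneg (by norm_num) ?_
  intro s hs
  exact Real.rpow_nonneg (by nlinarith [hs.1, hs.2]) p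

lemma cont_gI {p : ℝ} (hp : -1 < p) : Continuous (gI p) := by
  refine intervalIntegral.continuous_of_dominated_interval
    (bound := fun s => (1 - s ^ 2) ^ p) (fun x => ?_) (fun x => ?_) (gInt hp) ?_
  · exact ((meas_g p).mul
      (Real.measurable_cos.comp (measurable_id.const_mul x))).aestronglyMeasurable
  · filter_upwards with s hs
    rw [uIoc_eq] at hs
    have hbase : (0:ℝ) ≤ 1 - s ^ 2 := by nlinarith [hs.1, hs.2]
    have hg : 0 ≤ (1 - s ^ 2) ^ p := Real.rpow_nonneg hbase p
    rw [Real.norm_eq_abs, abs_mul, abs_of_nonneg hg]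
    calc (1 - s ^ 2) ^ p * |Real.cos (x * s)| ≤ (1 - s ^ 2) ^ p * 1 :=
          mul_le_mul_of_nonneg_left (Real.abs_cos_le_one _) hg
      _ = (1 - s ^ 2) ^ p := mul_one _
  · filter_upwards with s _
    exact continuous_const.mul (Real.continuous_cos.comp (continuous_id.mul continuous_const))

lemma hasDerivAt_gI {p : ℝ} (hp : -1 < p) (x : ℝ) :
    HasDerivAt (gI p) (-gK p x) x := by
  have key := intervalIntegral.hasDerivAt_integral_of_dominated_loc_of_deriv_le
    (F := fun x s => (1 - s ^ 2) ^ p * Real.cos (x * s))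
    (F' := fun x s => (1 - s ^ 2) ^ p * (-Real.sin (x * s) * s))
    (x₀ := x) (bound := fun s => (1 - s ^ 2) ^ p) (a := -1) (b := 1) (μ := volume)
    (Metric.ball_mem_nhds x one_pos) ?_ ?_ ?_ ?_ (gInt hp) ?_
  · have h2 := key.2
    have : (∫ s in (-1:ℝ)..1, (1 - s ^ 2) ^ p * (-Real.sin (x * s) * s)) = -gK p x := by
      unfold gK
      rw [← intervalIntegral.integral_neg]
      congr 1; funext s; ring
    rw [this] at h2
    exact h2
  · filter_upwards with y
    exact ((meas_g p).mul
      (Real.measurable_cos.comp (measurable_id.const_mul y))).aestronglyMeasurable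
  · exact gInt_mul hp (Real.measurable_cos.comp (measurable_id.const_mul x))
      (fun s _ => Real.abs_cos_le_one _)
  · exact ((meas_g p).mul ((Real.measurable_sin.comp
      (measurable_id.const_mul x)).neg.mul measurable_id)).aestronglyMeasurable
  · filter_upwards with s hs y _
    rw [uIoc_eq] at hs
    have hbase : (0:ℝ) ≤ 1 - s ^ 2 := by nlinarith [hs.1, hs.2]
    have hg : 0 ≤ (1 - s ^ 2) ^ p := Real.rpow_nonneg hbase p
    have h1 : |s| ≤ 1 := abs_le.2 ⟨hs.1.le, hs.2⟩
    rw [Real.norm_eq_abs, abs_mul, abs_of_nonneg hg, abs_mul, abs_neg]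
    calc (1 - s ^ 2) ^ p * (|Real.sin (y * s)| * |s|) ≤ (1 - s ^ 2) ^ p * (1 * 1) := by
          refine mul_le_mul_of_nonneg_left ?_ hg
          exact mul_le_mul (Real.abs_sin_le_one _) h1 (abs_nonneg _) zero_le_one
      _ = (1 - s ^ 2) ^ p := by rw [mul_one, mul_one]
  · filter_upwards with s _ y _
    exact ((hasDerivAt_mul_const s).cos.const_mul _)

lemma besselJ_eq (μ x : ℝ) :
    besselJ μ x = (x / 2) ^ μ / (Real.Gamma (μ + 1 / 2) * Real.Gamma (1 / 2)) *
      gI (μ - 1 / 2) x := rfl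

lemma ibp_identity {p : ℝ} (hp : 0 < p) (hp1 : -1 < p - 1) (x : ℝ) :
    2 * p * gI (p - 1) x = (2 * p + 1) * gI p x - x * gK p x := by
  have hp0 : (-1:ℝ) < p := by linarith
  set φ : ℝ → ℝ := fun s => s * (1 - s ^ 2) ^ p * Real.cos (x * s) with hφ
  set φ' : ℝ → ℝ := fun s =>
    (2 * p + 1) * ((1 - s ^ 2) ^ p * Real.cos (x * s)) -
    2 * p * ((1 - s ^ 2) ^ (p - 1) * Real.cos (x * s)) -
    x * ((1 - s ^ 2) ^ p * (s * Real.sin (x * s))) with hφ'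
  -- integrability of the pieces
  have msin : Measurable fun s : ℝ => s * Real.sin (x * s) :=
    measurable_id.mul (Real.measurable_sin.comp (measurable_id.const_mul x))
  have hbsin : ∀ s ∈ Set.Icc (-1:ℝ) 1, |s * Real.sin (x * s)| ≤ 1 := by
    intro s hs
    rw [abs_mul]
    calc |s| * |Real.sin (x * s)| ≤ 1 * 1 :=
          mul_le_mul (abs_le.2 ⟨hs.1, hs.2⟩) (Real.abs_sin_le_one _) (abs_nonneg _) zero_le_one
      _ = 1 := one_mul 1
  have mcos : Measurable fun s : ℝ => Real.cos (x * s) :=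
    Real.measurable_cos.comp (measurable_id.const_mul x)
  have hbcos : ∀ s ∈ Set.Icc (-1:ℝ) 1, |Real.cos (x * s)| ≤ 1 :=
    fun s _ => Real.abs_cos_le_one _
  have t1 : IntervalIntegrable (fun s => (1 - s ^ 2) ^ p * Real.cos (x * s)) volume (-1) 1 :=
    gInt_mul hp0 mcos hbcos
  have t2 : IntervalIntegrable (fun s => (1 - s ^ 2) ^ (p - 1) * Real.cos (x * s)) volume (-1) 1 :=
    gInt_mul hp1 mcos hbcos
  have t3 : IntervalIntegrable (fun s => (1 - s ^ 2) ^ p * (s * Real.sin (x * s))) volume (-1) 1 :=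
    gInt_mul hp0 msin hbsin
  have hint : IntervalIntegrable φ' volume (-1) 1 :=
    ((t1.const_mul _).sub (t2.const_mul _)).sub (t3.const_mul _)
  -- continuity of φ
  have hcont : ContinuousOn φ (Set.Icc (-1:ℝ) 1) := by
    apply Continuous.continuousOn
    exact (continuous_id.mul ((continuous_const.sub (continuous_pow 2)).rpow_const
      fun s => Or.inr hp.le)).mul (Real.continuous_cos.comp (continuous_const.mul continuous_id))
  -- derivative of φ on the open interval
  have hderiv : ∀ s ∈ Set.Ioo (-1:ℝ) 1, HasDerivAt φ (φ' s) s := by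
    intro s hs
    have hne : (1 - s ^ 2 : ℝ) ≠ 0 := by nlinarith [hs.1, hs.2]
    have h2 : HasDerivAt (fun s : ℝ => (1 - s ^ 2 : ℝ)) (-(2 * s)) s := by
      simpa using ((hasDerivAt_pow 2 s).const_sub 1)
    have h2' : HasDerivAt (fun s : ℝ => (1 - s ^ 2) ^ p)
        (-(2 * s) * p * (1 - s ^ 2) ^ (p - 1)) s := h2.rpow_const (Or.inl hne)
    have h3 : HasDerivAt (fun s : ℝ => Real.cos (x * s)) (-Real.sin (x * s) * x) s := by
      simpa [mul_comm] using (((hasDerivAt_id s).const_mul x).cos)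
    have hphi := ((hasDerivAt_id s).mul h2').mul h3
    have hkey : (1 - s ^ 2) ^ p = (1 - s ^ 2) ^ (p - 1) * (1 - s ^ 2) := by
      simpa using Real.rpow_add_one hne (p - 1)
    refine hphi.congr_deriv ?_
    simp only [hφ', id_eq, Pi.mul_apply]
    rw [hkey]
    ring
  have h0 : (∫ s in (-1:ℝ)..1, φ' s) = φ 1 - φ (-1) :=
    intervalIntegral.integral_eq_sub_of_hasDeriv_right_of_le (by norm_num) hcont
      (fun s hs => (hderiv s hs).hasDerivWithinAt) hint
  have hzero : (0:ℝ) ^ p = 0 := Real.zero_rpow hp.ne'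
  have hφ1 : φ 1 = 0 := by simp [hφ, hzero]
  have hφm1 : φ (-1) = 0 := by simp [hφ, hzero]
  have hsplit : (∫ s in (-1:ℝ)..1, φ' s) =
      (2 * p + 1) * gI p x - 2 * p * gI (p - 1) x - x * gK p x := by
    rw [intervalIntegral.integral_sub ((t1.const_mul _).sub (t2.const_mul _)) (t3.const_mul _),
        intervalIntegral.integral_sub (t1.const_mul _) (t2.const_mul _),
        intervalIntegral.integral_const_mul, intervalIntegral.integral_const_mul,
        intervalIntegral.integral_const_mul]
    have hgk : gK p x = ∫ s in (-1:ℝ)..1, (1 - s ^ 2) ^ p * (s * Real.sin (x * s)) := by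
      unfold gK; congr 1; funext s; ring
    rw [← hgk]
    rfl
  rw [hsplit, hφ1, hφm1] at h0
  linarith

lemma cgamma_pos {μ : ℝ} (hμ : 0 ≤ μ) :
    0 < Real.Gamma (μ + 1 / 2) * Real.Gamma (1 / 2) :=
  mul_pos (Real.Gamma_pos_of_pos (by linarith)) (Real.Gamma_pos_of_pos (by norm_num))

lemma besselJ_bound {μ tt ρ : ℝ} (hμ : 0 ≤ μ) (ht : 0 < tt) (hρ : 0 < ρ) :
    |ρ ^ μ * besselJ μ (tt * ρ)| ≤
      (tt / 2) ^ μ * gA (μ - 1 / 2) / (Real.Gamma (μ + 1 / 2) * Real.Gamma (1 / 2)) *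
        ρ ^ (2 * μ) := by
  have hp : (-1:ℝ) < μ - 1 / 2 := by linarith
  have hc : 0 < Real.Gamma (μ + 1 / 2) * Real.Gamma (1 / 2) := cgamma_pos hμ
  set C := Real.Gamma (μ + 1 / 2) * Real.Gamma (1 / 2) with hC
  rw [besselJ_eq]
  have h1 : (tt * ρ / 2 : ℝ) ^ μ = (tt / 2) ^ μ * ρ ^ μ := by
    rw [show (tt * ρ / 2 : ℝ) = (tt / 2) * ρ by ring,
      Real.mul_rpow (by positivity) hρ.le]
  rw [h1]
  have hA : 0 ≤ ρ ^ μ := Real.rpow_nonneg hρ.le μ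
  have hB : 0 ≤ (tt / 2) ^ μ := Real.rpow_nonneg (by positivity) μ
  have hD : 0 ≤ ρ ^ μ * ((tt / 2) ^ μ * ρ ^ μ / C) :=
    mul_nonneg hA (div_nonneg (mul_nonneg hB hA) hc.le)
  calc |ρ ^ μ * ((tt / 2) ^ μ * ρ ^ μ / C * gI (μ - 1 / 2) (tt * ρ))|
      = ρ ^ μ * ((tt / 2) ^ μ * ρ ^ μ / C) * |gI (μ - 1 / 2) (tt * ρ)| := by
        rw [show ρ ^ μ * ((tt / 2) ^ μ * ρ ^ μ / C * gI (μ - 1 / 2) (tt * ρ)) =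
          ρ ^ μ * ((tt / 2) ^ μ * ρ ^ μ / C) * gI (μ - 1 / 2) (tt * ρ) by ring,
          abs_mul, abs_of_nonneg hD]
    _ ≤ ρ ^ μ * ((tt / 2) ^ μ * ρ ^ μ / C) * gA (μ - 1 / 2) :=
        mul_le_mul_of_nonneg_left (abs_gI_le hp _) hD
    _ = (tt / 2) ^ μ * gA (μ - 1 / 2) / C * ρ ^ (2 * μ) := by
        rw [two_mul, Real.rpow_add hρ]; ring

lemma alg (ν tt ρ A Bq K CC g u w a rν rν1 pw : ℝ)
    (hν : 1 ≤ ν) (hg : g ≠ 0)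
    (hC : CC = (ν - 1/2) * g)
    (hu : pw = u * (tt/2))
    (ha : rν * rν1 = a)
    (h3 : w = a * ρ)
    (hid : (2*(ν-1/2)) * Bq = (2*(ν-1/2)+1) * A - tt*ρ*K) :
    tt * (rν * (u * rν1 / g * Bq)) = pw / CC * (2*ν*a*A + w*(-K*tt)) := by
  have h2ν : (ν - 1/2) ≠ 0 := by intro h; nlinarith
  subst hC hu h3
  have hx : 2*ν*A - tt*ρ*K = (2*ν-1) * Bq := by linarith [hid]
  have hrhs : 2*ν*a*A + a*ρ*(-K*tt) = a*((2*ν-1)*Bq) := by linear_combination a * hx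
  rw [hrhs, ← ha]
  have h2ν' : (2*ν-1) ≠ 0 := by intro h; nlinarith
  have h0 : ν*g*2 - g ≠ 0 := by
    rw [show ν*g*2 - g = (2*ν-1)*g by ring]; exact mul_ne_zero h2ν' hg
  field_simp

lemma hasDerivAt_f {ν tt : ℝ} (hν : 1 ≤ ν) (ht : 0 < tt) {ρ : ℝ} (hρ : 0 < ρ) :
    HasDerivAt (fun r => r ^ ν * besselJ ν (tt * r))
      (tt * (ρ ^ ν * besselJ (ν - 1) (tt * ρ))) ρ := by
  have hp : (-1:ℝ) < ν - 1 / 2 := by linarith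
  have hνpos : (0:ℝ) < ν := by linarith
  set p := ν - 1 / 2 with hpdef
  set C := Real.Gamma (ν + 1 / 2) * Real.Gamma (1 / 2) with hCdef
  have hc : 0 < C := cgamma_pos hνpos.le
  -- derivative of the reparametrized function
  have hpow : HasDerivAt (fun r : ℝ => r ^ (2 * ν)) (2 * ν * ρ ^ (2 * ν - 1)) ρ :=
    Real.hasDerivAt_rpow_const (Or.inl hρ.ne')
  have hinner : HasDerivAt (fun r : ℝ => tt * r) tt ρ := by
    simpa using (hasDerivAt_id ρ).const_mul tt
  have hgi : HasDerivAt (fun r : ℝ => gI p (tt * r)) (-gK p (tt * ρ) * tt) ρ :=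
    (hasDerivAt_gI hp (tt * ρ)).comp ρ hinner
  have hf := (hpow.mul hgi).const_mul ((tt / 2) ^ ν / C)
  -- the two functions agree near ρ
  have heq : (fun r : ℝ => r ^ ν * besselJ ν (tt * r)) =ᶠ[nhds ρ]
      (fun r : ℝ => (tt / 2) ^ ν / C * (r ^ (2 * ν) * gI p (tt * r))) := by
    filter_upwards [isOpen_Ioi.mem_nhds hρ] with r hr
    rw [besselJ_eq]
    have h1 : (tt * r / 2 : ℝ) ^ ν = (tt / 2) ^ ν * r ^ ν := by
      rw [show (tt * r / 2 : ℝ) = (tt / 2) * r by ring,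
        Real.mul_rpow (by positivity) (le_of_lt hr)]
    rw [h1, two_mul, Real.rpow_add hr]
    ring
  have hfinal : HasDerivAt (fun r : ℝ => r ^ ν * besselJ ν (tt * r))
      ((tt / 2) ^ ν / C * (2 * ν * ρ ^ (2 * ν - 1) * gI p (tt * ρ) +
        ρ ^ (2 * ν) * (-gK p (tt * ρ) * tt))) ρ := by
    exact HasDerivAt.congr_of_eventuallyEq hf heq
  convert hfinal using 1
  -- now the algebraic identity
  have hgamma : Real.Gamma (ν + 1 / 2) = (ν - 1 / 2) * Real.Gamma (ν - 1 / 2) := by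
    rw [show ν + 1 / 2 = (ν - 1 / 2) + 1 by ring]
    exact Real.Gamma_add_one (by intro h; simp at h; linarith)
  have h5 : Real.Gamma (ν - 1 + 1 / 2) = Real.Gamma (ν - 1 / 2) := by congr 1; ring
  rw [besselJ_eq]
  have h1 : (tt * ρ / 2 : ℝ) ^ (ν - 1) = (tt / 2) ^ (ν - 1) * ρ ^ (ν - 1) := by
    rw [show (tt * ρ / 2 : ℝ) = (tt / 2) * ρ by ring,
      Real.mul_rpow (by positivity) hρ.le]
  rw [h1]
  have hg : Real.Gamma (ν - 1 + 1 / 2) * Real.Gamma (1 / 2) ≠ 0 :=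
    (cgamma_pos (μ := ν - 1) (by linarith)).ne'
  have hC : C = (ν - 1 / 2) * (Real.Gamma (ν - 1 + 1 / 2) * Real.Gamma (1 / 2)) := by
    rw [hCdef, hgamma, h5]; ring
  have hu : (tt / 2 : ℝ) ^ ν = (tt / 2) ^ (ν - 1) * (tt / 2) := by
    have := Real.rpow_add_one (x := tt / 2) (by positivity) (ν - 1)
    simpa using this
  have ha : ρ ^ ν * ρ ^ (ν - 1) = ρ ^ (2 * ν - 1) := by
    rw [show (2 * ν - 1 : ℝ) = ν + (ν - 1) by ring, Real.rpow_add hρ]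
  have h3 : ρ ^ (2 * ν) = ρ ^ (2 * ν - 1) * ρ := by
    have := Real.rpow_add_one hρ.ne' (2 * ν - 1)
    simpa using this
  have hid' : (2 * (ν - 1 / 2)) * gI (ν - 1 - 1 / 2) (tt * ρ) =
      (2 * (ν - 1 / 2) + 1) * gI (ν - 1 / 2) (tt * ρ) - tt * ρ * gK (ν - 1 / 2) (tt * ρ) := by
    have h := ibp_identity (p := ν - 1 / 2) (by linarith) (by linarith) (tt * ρ)
    rw [show ν - 1 / 2 - 1 = ν - 1 - 1 / 2 by ring] at h
    exact h
  exact alg ν tt ρ (gI p (tt * ρ)) (gI (ν - 1 - 1 / 2) (tt * ρ)) (gK p (tt * ρ)) C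
    (Real.Gamma (ν - 1 + 1 / 2) * Real.Gamma (1 / 2)) ((tt / 2) ^ (ν - 1)) (ρ ^ (2 * ν))
    (ρ ^ (2 * ν - 1)) (ρ ^ ν) (ρ ^ (ν - 1)) ((tt / 2) ^ ν) hν hg hC hu ha h3 hid'

lemma int_major {a b B : ℝ} (ha : -1 < a) (hb : 0 < b) :
    IntegrableOn (fun ρ : ℝ => B * (ρ ^ a * Real.exp (-b * ρ))) (Set.Ioi 0) := by
  have h := integrableOn_rpow_mul_exp_neg_mul_rpow ha (zero_lt_one : (0:ℝ) < 1) hb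
  simp only [Real.rpow_one] at h
  exact h.const_mul B

lemma intOn_of_bound {F : ℝ → ℝ} (hF : AEStronglyMeasurable F (volume.restrict (Set.Ioi 0)))
    {a b B : ℝ} (ha : -1 < a) (hb : 0 < b)
    (h : ∀ ρ ∈ Set.Ioi (0:ℝ), ‖F ρ‖ ≤ B * (ρ ^ a * Real.exp (-b * ρ))) :
    IntegrableOn F (Set.Ioi 0) :=
  (int_major ha hb).mono' hF ((ae_restrict_iff' measurableSet_Ioi).2 (ae_of_all _ h))

lemma cont_besselJ {μ tt : ℝ} (hμ : 0 ≤ μ) (hp : -1 < μ - 1 / 2) :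
    Continuous (fun ρ : ℝ => besselJ μ (tt * ρ)) := by
  simp only [besselJ_eq]
  refine Continuous.mul (Continuous.div_const ?_ _) ((cont_gI hp).comp
    (continuous_const.mul continuous_id))
  exact (Real.continuous_rpow_const hμ).comp
    ((continuous_const.mul continuous_id).div_const 2)

lemma intOn_main {μ tt εε R : ℝ} (hμ : 0 ≤ μ) (hp : -1 < μ - 1 / 2) (ht : 0 < tt)
    (hε : 0 < εε) (trig : ℝ → ℝ) (htrig : ∀ y, |trig y| ≤ 1) (hcont : Continuous trig) :
    IntegrableOn (fun ρ => Real.exp (-εε * ρ) * trig (R * ρ) * ρ ^ μ * besselJ μ (tt * ρ))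
      (Set.Ioi 0) := by
  set B := (tt / 2) ^ μ * gA (μ - 1 / 2) / (Real.Gamma (μ + 1 / 2) * Real.Gamma (1 / 2)) with hB
  refine intOn_of_bound ?_ (show (-1:ℝ) < 2 * μ by linarith) hε (B := B) ?_
  · apply Continuous.aestronglyMeasurable
    exact (((Real.continuous_exp.comp (continuous_const.mul continuous_id)).mul
      (hcont.comp (continuous_const.mul continuous_id))).mul
      (Real.continuous_rpow_const hμ)).mul (cont_besselJ hμ hp)
  · intro ρ hρ
    have hρ' : (0:ℝ) < ρ := hρ
    have hJ := besselJ_bound hμ ht hρ'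
    have he : |Real.exp (-εε * ρ)| = Real.exp (-εε * ρ) := abs_of_pos (Real.exp_pos _)
    calc ‖Real.exp (-εε * ρ) * trig (R * ρ) * ρ ^ μ * besselJ μ (tt * ρ)‖
        = |Real.exp (-εε * ρ) * trig (R * ρ)| * |ρ ^ μ * besselJ μ (tt * ρ)| := by
          rw [Real.norm_eq_abs, show Real.exp (-εε * ρ) * trig (R * ρ) * ρ ^ μ *
            besselJ μ (tt * ρ) = (Real.exp (-εε * ρ) * trig (R * ρ)) *
            (ρ ^ μ * besselJ μ (tt * ρ)) by ring, abs_mul]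
      _ ≤ Real.exp (-εε * ρ) * (B * ρ ^ (2 * μ)) := by
          refine mul_le_mul ?_ hJ (abs_nonneg _) (Real.exp_pos _).le
          rw [abs_mul, he]
          calc Real.exp (-εε * ρ) * |trig (R * ρ)| ≤ Real.exp (-εε * ρ) * 1 :=
                mul_le_mul_of_nonneg_left (htrig _) (Real.exp_pos _).le
            _ = Real.exp (-εε * ρ) := mul_one _
      _ = B * (ρ ^ (2 * μ) * Real.exp (-εε * ρ)) := by ring

/-- Regularized recurrence: for real `ν ≥ 1`, `t, ε > 0`, the three integrals defining
`G_{ν-1}`, `G_ν`, `H_ν` converge absolutely, `G_{ν-1}` is differentiable on `(0,∞)`, and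
`(1/R) G_{ν-1}'(R) = (1/t) G_ν(R) + (ε/(Rt)) H_ν(R)` for every `R > 0`. -/
theorem regularized_bessel_recurrence (ν t ε : ℝ) (hν : 1 ≤ ν) (ht : 0 < t) (hε : 0 < ε) :
    ∀ R > (0 : ℝ),
      IntegrableOn
          (fun ρ => Real.exp (-ε * ρ) * Real.sin (R * ρ) * ρ ^ (ν - 1) * besselJ (ν - 1) (t * ρ))
          (Set.Ioi 0) ∧
      IntegrableOn
          (fun ρ => Real.exp (-ε * ρ) * Real.sin (R * ρ) * ρ ^ ν * besselJ ν (t * ρ))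
          (Set.Ioi 0) ∧
      IntegrableOn
          (fun ρ => Real.exp (-ε * ρ) * Real.cos (R * ρ) * ρ ^ ν * besselJ ν (t * ρ))
          (Set.Ioi 0) ∧
      DifferentiableAt ℝ (G ε t (ν - 1)) R ∧
      (1 / R) * deriv (G ε t (ν - 1)) R = (1 / t) * G ε t ν R + (ε / (R * t)) * H ε t ν R := by
  intro R hR
  have hν1 : (0:ℝ) ≤ ν - 1 := by linarith
  have hν0 : (0:ℝ) ≤ ν := by linarith
  have hp1 : (-1:ℝ) < (ν - 1) - 1 / 2 := by linarith
  have hpν : (-1:ℝ) < ν - 1 / 2 := by linarith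
  have i1 := intOn_main (μ := ν - 1) (tt := t) (εε := ε) (R := R) hν1 hp1 ht hε
    Real.sin (fun y => Real.abs_sin_le_one y) Real.continuous_sin
  have i2 := intOn_main (μ := ν) (tt := t) (εε := ε) (R := R) hν0 hpν ht hε
    Real.sin (fun y => Real.abs_sin_le_one y) Real.continuous_sin
  have i3 := intOn_main (μ := ν) (tt := t) (εε := ε) (R := R) hν0 hpν ht hε
    Real.cos (fun y => Real.abs_cos_le_one y) Real.continuous_cos
  refine ⟨i1, i2, i3, ?_⟩
  -- constants
  set B1 := (t / 2) ^ (ν - 1) * gA (ν - 1 - 1 / 2) /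
    (Real.Gamma (ν - 1 + 1 / 2) * Real.Gamma (1 / 2)) with hB1
  -- differentiation under the integral sign
  set F : ℝ → ℝ → ℝ := fun R' ρ =>
    Real.exp (-ε * ρ) * Real.sin (R' * ρ) * ρ ^ (ν - 1) * besselJ (ν - 1) (t * ρ) with hF
  set F' : ℝ → ℝ → ℝ := fun R' ρ =>
    Real.exp (-ε * ρ) * (Real.cos (R' * ρ) * ρ) * ρ ^ (ν - 1) * besselJ (ν - 1) (t * ρ) with hF'
  have hkey := hasDerivAt_integral_of_dominated_loc_of_deriv_le
    (μ := volume.restrict (Set.Ioi 0)) (F := F) (F' := F') (x₀ := R)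
    (bound := fun ρ => B1 * (ρ ^ (2 * (ν - 1) + 1) * Real.exp (-ε * ρ)))
    (Metric.ball_mem_nhds R one_pos) ?_ ?_ ?_ ?_ ?_ ?_
  rotate_left
  · filter_upwards with R'
    apply Continuous.aestronglyMeasurable
    exact (((Real.continuous_exp.comp (continuous_const.mul continuous_id)).mul
      (Real.continuous_sin.comp (continuous_const.mul continuous_id))).mul
      (Real.continuous_rpow_const hν1)).mul (cont_besselJ hν1 hp1)
  · exact i1
  · apply Continuous.aestronglyMeasurable
    exact (((Real.continuous_exp.comp (continuous_const.mul continuous_id)).mul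
      ((Real.continuous_cos.comp (continuous_const.mul continuous_id)).mul continuous_id)).mul
      (Real.continuous_rpow_const hν1)).mul (cont_besselJ hν1 hp1)
  · rw [ae_restrict_iff' measurableSet_Ioi]
    filter_upwards with ρ hρ
    intro x _
    have hρ' : (0:ℝ) < ρ := hρ
    have hJ := besselJ_bound hν1 ht hρ'
    have hpow : ρ ^ (2 * (ν - 1) + 1) = ρ ^ (2 * (ν - 1)) * ρ :=
      Real.rpow_add_one hρ'.ne' _
    calc ‖F' x ρ‖
        = |Real.exp (-ε * ρ) * (Real.cos (x * ρ) * ρ)| * |ρ ^ (ν - 1) * besselJ (ν - 1) (t * ρ)| := by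
          simp only [hF', Real.norm_eq_abs]
          rw [show Real.exp (-ε * ρ) * (Real.cos (x * ρ) * ρ) *
            ρ ^ (ν - 1) * besselJ (ν - 1) (t * ρ) = (Real.exp (-ε * ρ) * (Real.cos (x * ρ) * ρ)) *
            (ρ ^ (ν - 1) * besselJ (ν - 1) (t * ρ)) by ring, abs_mul]
      _ ≤ (Real.exp (-ε * ρ) * ρ) * (B1 * ρ ^ (2 * (ν - 1))) := by
          refine mul_le_mul ?_ hJ (abs_nonneg _) (by positivity)
          rw [abs_mul, abs_of_pos (Real.exp_pos _), abs_mul, abs_of_pos hρ']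
          calc Real.exp (-ε * ρ) * (|Real.cos (x * ρ)| * ρ)
              ≤ Real.exp (-ε * ρ) * (1 * ρ) := by
                refine mul_le_mul_of_nonneg_left ?_ (Real.exp_pos _).le
                exact mul_le_mul_of_nonneg_right (Real.abs_cos_le_one _) hρ'.le
            _ = Real.exp (-ε * ρ) * ρ := by ring
      _ = B1 * (ρ ^ (2 * (ν - 1) + 1) * Real.exp (-ε * ρ)) := by rw [hpow]; ring
  · exact int_major (by linarith) hε
  · rw [ae_restrict_iff' measurableSet_Ioi]
    filter_upwards with ρ _
    intro x _
    exact (((hasDerivAt_mul_const ρ).sin.const_mul (Real.exp (-ε * ρ))).mul_const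
      (ρ ^ (ν - 1))).mul_const (besselJ (ν - 1) (t * ρ))
  obtain ⟨hD_int, hG⟩ := hkey
  have hGderiv : HasDerivAt (G ε t (ν - 1)) (∫ ρ in Set.Ioi (0:ℝ), F' R ρ) R := hG
  set D := ∫ ρ in Set.Ioi (0:ℝ), F' R ρ with hDdef
  refine ⟨hGderiv.differentiableAt, ?_⟩
  rw [hGderiv.deriv]
  -- integration by parts on (0, ∞)
  set Φ : ℝ → ℝ := fun ρ => Real.exp (-ε * ρ) * Real.cos (R * ρ) *
    (ρ ^ ν * besselJ ν (t * ρ)) with hΦ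
  set V : ℝ → ℝ := fun ρ => (Real.exp (-ε * ρ) * -ε * Real.cos (R * ρ) +
    Real.exp (-ε * ρ) * (-Real.sin (R * ρ) * R)) * (ρ ^ ν * besselJ ν (t * ρ)) with hV
  set W : ℝ → ℝ := fun ρ => Real.exp (-ε * ρ) * Real.cos (R * ρ) *
    (t * (ρ ^ ν * besselJ (ν - 1) (t * ρ))) with hW
  have hWint : IntegrableOn W (Set.Ioi 0) := by
    refine (hD_int.const_mul t).congr ?_
    rw [Filter.EventuallyEq, ae_restrict_iff' measurableSet_Ioi]
    filter_upwards with ρ hρ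
    have hρ' : (0:ℝ) < ρ := hρ
    have hpow : ρ ^ ν = ρ ^ (ν - 1) * ρ := by
      have := Real.rpow_add_one hρ'.ne' (ν - 1)
      simpa using this
    simp only [hW, hF']
    rw [hpow]; ring
  have hVint : IntegrableOn V (Set.Ioi 0) := by
    refine (Integrable.add (i3.const_mul (-ε)) (i2.const_mul (-R))).congr ?_
    refine Filter.Eventually.of_forall (fun ρ => ?_)
    simp only [hV, Pi.add_apply]; ring
  have hΦderiv : ∀ ρ ∈ Set.Ioi (0:ℝ), HasDerivAt Φ (V ρ + W ρ) ρ := by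
    intro ρ hρ
    have hρ' : (0:ℝ) < ρ := hρ
    have hexp : HasDerivAt (fun ρ : ℝ => Real.exp (-ε * ρ)) (Real.exp (-ε * ρ) * -ε) ρ := by
      simpa using (((hasDerivAt_id ρ).const_mul (-ε)).exp)
    have hcos : HasDerivAt (fun ρ : ℝ => Real.cos (R * ρ)) (-Real.sin (R * ρ) * R) ρ := by
      simpa [mul_comm] using ((hasDerivAt_id ρ).const_mul R).cos
    have hfd := hasDerivAt_f hν ht hρ'
    exact (hexp.mul hcos).mul hfd
  have hΦcont : ContinuousWithinAt Φ (Set.Ici 0) 0 := by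
    apply Continuous.continuousWithinAt
    exact ((Real.continuous_exp.comp (continuous_const.mul continuous_id)).mul
      (Real.continuous_cos.comp (continuous_const.mul continuous_id))).mul
      ((Real.continuous_rpow_const hν0).mul (cont_besselJ hν0 hpν))
  have hΦtop : Filter.Tendsto Φ Filter.atTop (nhds 0) := by
    set Bν := (t / 2) ^ ν * gA (ν - 1 / 2) /
      (Real.Gamma (ν + 1 / 2) * Real.Gamma (1 / 2)) with hBν
    have hg : Filter.Tendsto (fun ρ : ℝ => Bν * (ρ ^ (2 * ν) * Real.exp (-ε * ρ)))
        Filter.atTop (nhds 0) := by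
      have := (tendsto_rpow_mul_exp_neg_mul_atTop_nhds_zero (2 * ν) ε hε).const_mul Bν
      simpa using this
    refine squeeze_zero_norm' ?_ hg
    filter_upwards [Filter.eventually_gt_atTop 0] with ρ hρ
    have hJ := besselJ_bound hν0 ht hρ
    calc ‖Φ ρ‖ = |Real.exp (-ε * ρ) * Real.cos (R * ρ)| * |ρ ^ ν * besselJ ν (t * ρ)| := by
          rw [Real.norm_eq_abs, hΦ, abs_mul]
      _ ≤ Real.exp (-ε * ρ) * (Bν * ρ ^ (2 * ν)) := by
          refine mul_le_mul ?_ hJ (abs_nonneg _) (Real.exp_pos _).le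
          rw [abs_mul, abs_of_pos (Real.exp_pos _)]
          calc Real.exp (-ε * ρ) * |Real.cos (R * ρ)| ≤ Real.exp (-ε * ρ) * 1 :=
                mul_le_mul_of_nonneg_left (Real.abs_cos_le_one _) (Real.exp_pos _).le
            _ = Real.exp (-ε * ρ) := mul_one _
      _ = Bν * (ρ ^ (2 * ν) * Real.exp (-ε * ρ)) := by ring
  have hΦ0 : Φ 0 = 0 := by
    simp [hΦ, Real.zero_rpow (show ν ≠ 0 by linarith)]
  have hFTC : (∫ ρ in Set.Ioi (0:ℝ), (V ρ + W ρ)) = 0 - Φ 0 :=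
    integral_Ioi_of_hasDerivAt_of_tendsto hΦcont hΦderiv (hVint.add hWint) hΦtop
  rw [hΦ0, sub_zero] at hFTC
  have hsplit : (∫ ρ in Set.Ioi (0:ℝ), (V ρ + W ρ)) =
      (∫ ρ in Set.Ioi (0:ℝ), V ρ) + ∫ ρ in Set.Ioi (0:ℝ), W ρ :=
    integral_add hVint hWint
  have hWval : (∫ ρ in Set.Ioi (0:ℝ), W ρ) = t * D := by
    rw [hDdef, ← integral_const_mul]
    refine setIntegral_congr_fun measurableSet_Ioi (fun ρ hρ => ?_)
    have hρ' : (0:ℝ) < ρ := hρ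
    have hpow : ρ ^ ν = ρ ^ (ν - 1) * ρ := by
      have := Real.rpow_add_one hρ'.ne' (ν - 1)
      simpa using this
    simp only [hW, hF']
    rw [hpow]; ring
  have hVval : (∫ ρ in Set.Ioi (0:ℝ), V ρ) =
      -ε * H ε t ν R + -R * G ε t ν R := by
    rw [H, G, ← integral_const_mul, ← integral_const_mul, ← integral_add
      ((i3.const_mul (-ε))) ((i2.const_mul (-R)))]
    refine integral_congr_ae (Filter.Eventually.of_forall (fun ρ => ?_))
    simp only [hV]; ring
  rw [hsplit, hWval, hVval] at hFTC
  have hRne : R ≠ 0 := hR.ne'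
  have htne : t ≠ 0 := ht.ne'
  have hDval : D = (ε * H ε t ν R + R * G ε t ν R) / t := by
    rw [eq_div_iff htne]; linarith [hFTC]
  rw [hDval]
  field_simp
  ring
end

section
/- Let ν > −1/2 be real. Then for every x > 0, ((x/2)^ν / (Γ(ν+1/2) Γ(1/2))) ∫_{−1}^{1} (1−s²)^{ν−1/2} e^{ixs} ds = Σ_{m=0}^{∞} (−1)^m (x/2)^{ν+2m} / (m! Γ(ν+m+1)), i.e., the Poisson-type integral representation of the Bessel function J_ν coincides with its power series expansion, the series converging absolutely. -/
open MeasureTheory Set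

/-- Real Beta integral: integrability and value. -/
lemma realBeta_aux (u v : ℝ) (hu : 0 < u) (hv : 0 < v) :
    IntegrableOn (fun t : ℝ => t ^ (u - 1) * (1 - t) ^ (v - 1)) (Ioo (0:ℝ) 1) ∧
    ∫ t in Ioo (0:ℝ) 1, t ^ (u - 1) * (1 - t) ^ (v - 1)
      = Real.Gamma u * Real.Gamma v / Real.Gamma (u + v) := by
  have huc : 0 < ((u : ℂ)).re := by simpa using hu
  have hvc : 0 < ((v : ℂ)).re := by simpa using hv
  set Fc : ℝ → ℂ := fun x : ℝ => (x : ℂ) ^ ((u : ℂ) - 1) * (1 - (x : ℂ)) ^ ((v : ℂ) - 1) with hFc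
  have hC : IntervalIntegrable Fc volume 0 1 := Complex.betaIntegral_convergent huc hvc
  have hCioo : IntegrableOn Fc (Ioo (0:ℝ) 1) :=
    ((intervalIntegrable_iff_integrableOn_Ioc_of_le zero_le_one).1 hC).mono_set
      Ioo_subset_Ioc_self
  have hpt : ∀ x ∈ Ioo (0:ℝ) 1,
      ((x ^ (u - 1) * (1 - x) ^ (v - 1) : ℝ) : ℂ) = Fc x := by
    intro x hx
    rw [hFc, Complex.ofReal_mul, Complex.ofReal_cpow hx.1.le,
      Complex.ofReal_cpow (by linarith [hx.2] : (0:ℝ) ≤ 1 - x)]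
    push_cast
    ring
  have hint : IntegrableOn (fun t : ℝ => t ^ (u - 1) * (1 - t) ^ (v - 1)) (Ioo (0:ℝ) 1) := by
    refine (MeasureTheory.Integrable.re hCioo).congr ?_
    filter_upwards [ae_restrict_mem measurableSet_Ioo] with x hx
    rw [← hpt x hx]
    simp
  refine ⟨hint, ?_⟩
  have hval := Complex.Gamma_mul_Gamma_eq_betaIntegral huc hvc
  have hbeta : Complex.betaIntegral (u : ℂ) (v : ℂ)
      = ((∫ t in Ioo (0:ℝ) 1, t ^ (u - 1) * (1 - t) ^ (v - 1) : ℝ) : ℂ) := by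
    rw [Complex.betaIntegral, intervalIntegral.integral_of_le zero_le_one,
      MeasureTheory.integral_Ioc_eq_integral_Ioo]
    calc ∫ t in Ioo (0:ℝ) 1, (t : ℂ) ^ ((u : ℂ) - 1) * (1 - (t : ℂ)) ^ ((v : ℂ) - 1)
        = ∫ t in Ioo (0:ℝ) 1, ((t ^ (u - 1) * (1 - t) ^ (v - 1) : ℝ) : ℂ) :=
          (setIntegral_congr_fun measurableSet_Ioo fun x hx => (hpt x hx).symm)
      _ = ((∫ t in Ioo (0:ℝ) 1, t ^ (u - 1) * (1 - t) ^ (v - 1) : ℝ) : ℂ) := integral_ofReal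
  rw [hbeta, ← Complex.ofReal_add, Complex.Gamma_ofReal, Complex.Gamma_ofReal,
    Complex.Gamma_ofReal, ← Complex.ofReal_mul, ← Complex.ofReal_mul] at hval
  have hreal : Real.Gamma u * Real.Gamma v
      = Real.Gamma (u + v) * ∫ t in Ioo (0:ℝ) 1, t ^ (u - 1) * (1 - t) ^ (v - 1) := by
    exact_mod_cast hval
  have hne : Real.Gamma (u + v) ≠ 0 := (Real.Gamma_pos_of_pos (by linarith)).ne'
  field_simp
  linarith [hreal]

/-- `Γ(m + 1/2) = √π (2m)! / (4^m m!)`. -/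
lemma gamma_nat_add_half_aux (m : ℕ) :
    Real.Gamma ((m : ℝ) + 1/2)
      = Real.sqrt Real.pi * (2*m).factorial / (4 ^ m * m.factorial) := by
  have h := Real.Gamma_mul_Gamma_add_half ((m : ℝ) + 1/2)
  have h1 : (m : ℝ) + 1/2 + 1/2 = (m : ℝ) + 1 := by ring
  have h2 : 2 * ((m : ℝ) + 1/2) = ((2*m : ℕ) : ℝ) + 1 := by push_cast; ring
  rw [h1, h2, show (1:ℝ) - (((2*m : ℕ):ℝ) + 1) = -((2*m : ℕ):ℝ) by ring, Real.Gamma_nat_eq_factorial, Real.Gamma_nat_eq_factorial,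
    Real.rpow_neg (by norm_num), Real.rpow_natCast] at h
  have h4 : ((2:ℝ) ^ (2*m))⁻¹ = ((4:ℝ) ^ m)⁻¹ := by
    rw [pow_mul]; norm_num
  rw [h4] at h
  have hfac : (m.factorial : ℝ) ≠ 0 := Nat.cast_ne_zero.2 m.factorial_ne_zero
  have h4m : ((4:ℝ) ^ m) ≠ 0 := by positivity
  field_simp at h ⊢
  linarith [h]

/-- The Poisson kernel moment integral. -/
lemma poisson_moment (ν : ℝ) (hν : -(1 / 2 : ℝ) < ν) (m : ℕ) :
    IntegrableOn (fun s : ℝ => (1 - s^2) ^ (ν - 1/2) * s ^ (2*m)) (Ioo (-1:ℝ) 1) ∧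
    ∫ s in Ioo (-1:ℝ) 1, (1 - s^2) ^ (ν - 1/2) * s ^ (2*m)
      = Real.Gamma ((m : ℝ) + 1/2) * Real.Gamma (ν + 1/2) / Real.Gamma (ν + m + 1) := by
  have hu : 0 < (m : ℝ) + 1/2 := by positivity
  have hv : 0 < ν + 1/2 := by linarith
  obtain ⟨hBint, hBval⟩ := realBeta_aux ((m : ℝ) + 1/2) (ν + 1/2) hu hv
  set g : ℝ → ℝ := fun t => t ^ ((m : ℝ) + 1/2 - 1) * (1 - t) ^ (ν + 1/2 - 1) with hg
  set f : ℝ → ℝ := fun s => (1 - s^2) ^ (ν - 1/2) * s ^ (2*m) with hf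
  -- change of variables t = s^2 on (0,1)
  have himg : (fun x : ℝ => x^2) '' Ioo 0 1 = Ioo (0:ℝ) 1 := by
    ext t
    simp only [Set.mem_image, Set.mem_Ioo]
    constructor
    · rintro ⟨x, ⟨hx0, hx1⟩, rfl⟩
      exact ⟨pow_pos hx0 2, by nlinarith⟩
    · rintro ⟨ht0, ht1⟩
      refine ⟨Real.sqrt t, ⟨Real.sqrt_pos.2 ht0, ?_⟩, Real.sq_sqrt ht0.le⟩
      rw [show (1:ℝ) = Real.sqrt 1 by simp]
      exact Real.sqrt_lt_sqrt ht0.le ht1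
  have hderiv : ∀ x ∈ Ioo (0:ℝ) 1,
      HasDerivWithinAt (fun x : ℝ => x^2) (2*x) (Ioo (0:ℝ) 1) x := by
    intro x hx
    simpa using (hasDerivAt_pow 2 x).hasDerivWithinAt
  have hinj : InjOn (fun x : ℝ => x^2) (Ioo (0:ℝ) 1) := by
    intro a ha b hb hab
    simp only at hab
    nlinarith [ha.1, hb.1, sq_nonneg (a - b)]
  have hptw : ∀ x ∈ Ioo (0:ℝ) 1, |2*x| • g (x^2) = 2 * f x := by
    intro x hx
    have hx0 : 0 < x := hx.1
    have hx2 : (0:ℝ) < 1 - x^2 := by nlinarith [hx.2]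
    have e1 : (x^2 : ℝ) ^ ((m : ℝ) + 1/2 - 1) = x ^ (2 * ((m : ℝ) + 1/2 - 1)) := by
      rw [← Real.rpow_natCast x 2, ← Real.rpow_mul hx0.le]
      norm_num
    have e2 : x ^ (2 * ((m : ℝ) + 1/2 - 1)) * (2*x) = 2 * x ^ ((2*m : ℕ) : ℝ) := by
      rw [show (2*x : ℝ) = 2 * x ^ (1:ℝ) by rw [Real.rpow_one],
        show (2 * ((m : ℝ) + 1/2 - 1)) = 2*(m:ℝ) - 1 by ring]
      rw [mul_comm (2 : ℝ) (x ^ ((1:ℝ)))]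
      rw [← mul_assoc, mul_assoc (x ^ (2*(m:ℝ) - 1)), mul_comm (x ^ ((1:ℝ))) 2]
      rw [← mul_assoc, mul_comm (x ^ (2*(m:ℝ) - 1) * 2) (x ^ (1:ℝ))]
      rw [← mul_assoc, mul_comm (x ^ ((1:ℝ))) (x ^ (2*(m:ℝ) - 1)), ← Real.rpow_add hx0]
      push_cast
      ring_nf
    rw [hg, hf]
    simp only [smul_eq_mul]
    rw [abs_of_pos (by linarith : (0:ℝ) < 2*x)]
    have : (1 - x^2) ^ (ν + 1/2 - 1) = (1 - x^2) ^ (ν - 1/2) := by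
      rw [show ν + 1/2 - 1 = ν - 1/2 by ring]
    rw [e1, this]
    calc 2*x * (x ^ (2 * ((m : ℝ) + 1/2 - 1)) * (1 - x^2) ^ (ν - 1/2))
        = (x ^ (2 * ((m : ℝ) + 1/2 - 1)) * (2*x)) * (1 - x^2) ^ (ν - 1/2) := by ring
      _ = 2 * x ^ ((2*m : ℕ) : ℝ) * (1 - x^2) ^ (ν - 1/2) := by rw [e2]
      _ = 2 * ((1 - x^2) ^ (ν - 1/2) * x ^ (2*m)) := by
          rw [Real.rpow_natCast]; ring
  -- integral over (0,1)
  have hcv : ∫ t in Ioo (0:ℝ) 1, g t = ∫ x in Ioo (0:ℝ) 1, 2 * f x := by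
    have hcv0 := integral_image_eq_integral_abs_deriv_smul measurableSet_Ioo hderiv hinj g
    rw [himg] at hcv0
    rw [hcv0]
    exact setIntegral_congr_fun measurableSet_Ioo hptw
  have hfint01 : IntegrableOn f (Ioo (0:ℝ) 1) := by
    have h1 : IntegrableOn (fun x => |2*x| • g (x^2)) (Ioo (0:ℝ) 1) := by
      rw [← integrableOn_image_iff_integrableOn_abs_deriv_smul measurableSet_Ioo hderiv hinj]
      rw [himg]; exact hBint
    have h2 : IntegrableOn (fun x => 2 * f x) (Ioo (0:ℝ) 1) :=
      h1.congr (by filter_upwards [ae_restrict_mem measurableSet_Ioo] with x hx using hptw x hx)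
    have := h2.const_mul (1/2 : ℝ)
    refine this.congr ?_
    filter_upwards with x
    ring
  -- reflection to (-1,0)
  have himgneg : (fun x : ℝ => -x) '' Ioo 0 1 = Ioo (-1:ℝ) 0 := by
    ext t
    simp only [Set.mem_image, Set.mem_Ioo]
    constructor
    · rintro ⟨x, ⟨hx0, hx1⟩, rfl⟩
      constructor <;> linarith
    · rintro ⟨ht0, ht1⟩
      exact ⟨-t, ⟨by linarith, by linarith⟩, neg_neg t⟩
  have hderivneg : ∀ x ∈ Ioo (0:ℝ) 1,
      HasDerivWithinAt (fun x : ℝ => -x) (-1 : ℝ) (Ioo (0:ℝ) 1) x := fun x _ =>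
    (hasDerivAt_neg x).hasDerivWithinAt
  have hinjneg : InjOn (fun x : ℝ => -x) (Ioo (0:ℝ) 1) := fun a _ b _ h => by
    simpa using neg_injective h
  have hfeven : ∀ x : ℝ, f (-x) = f x := by
    intro x
    rw [hf]
    simp only [neg_sq]
    rw [(even_two_mul m).neg_pow]
  have hcvneg : ∫ s in Ioo (-1:ℝ) 0, f s = ∫ x in Ioo (0:ℝ) 1, f x := by
    have hcv1 := integral_image_eq_integral_abs_deriv_smul measurableSet_Ioo hderivneg hinjneg f
    rw [himgneg] at hcv1
    rw [hcv1]
    refine setIntegral_congr_fun measurableSet_Ioo fun x _ => ?_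
    simp [hfeven x]
  have hfintneg : IntegrableOn f (Ioo (-1:ℝ) 0) := by
    rw [← himgneg, integrableOn_image_iff_integrableOn_abs_deriv_smul measurableSet_Ioo
      hderivneg hinjneg]
    refine hfint01.congr ?_
    filter_upwards with x
    simp [hfeven x]
  -- combine
  have hunion : Ioo (-1:ℝ) 0 ∪ Ico (0:ℝ) 1 = Ioo (-1:ℝ) 1 :=
    Ioo_union_Ico_eq_Ioo (by norm_num) (by norm_num)
  have hdisj : Disjoint (Ioo (-1:ℝ) 0) (Ico (0:ℝ) 1) :=
    Set.disjoint_left.mpr fun x hx hx' => absurd hx.2 (not_lt.mpr hx'.1)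
  have hfintIco : IntegrableOn f (Ico (0:ℝ) 1) :=
    (integrableOn_Ico_iff_integrableOn_Ioo).2 hfint01
  have hfull : IntegrableOn f (Ioo (-1:ℝ) 1) := by
    rw [← hunion]; exact hfintneg.union hfintIco
  refine ⟨hfull, ?_⟩
  have : ∫ s in Ioo (-1:ℝ) 1, f s
      = (∫ s in Ioo (-1:ℝ) 0, f s) + ∫ s in Ico (0:ℝ) 1, f s := by
    rw [← hunion, setIntegral_union hdisj measurableSet_Ico hfintneg hfintIco]
  rw [this, integral_Ico_eq_integral_Ioo, hcvneg]
  have h2 : (∫ x in Ioo (0:ℝ) 1, f x) + ∫ x in Ioo (0:ℝ) 1, f x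
      = ∫ x in Ioo (0:ℝ) 1, 2 * f x := by
    rw [integral_const_mul]; ring
  rw [h2, ← hcv, hBval]
  congr 1
  ring

/-- Base summability. -/
lemma base_summable (ν x : ℝ) (hν : -(1 / 2 : ℝ) < ν) (hx : 0 < x) :
    Summable (fun m : ℕ => (x/2) ^ (2*m) / (m.factorial * Real.Gamma (ν + m + 1))) := by
  set b : ℕ → ℝ := fun m => (x/2) ^ (2*m) / (m.factorial * Real.Gamma (ν + m + 1)) with hb
  have hΓpos : ∀ m : ℕ, 0 < Real.Gamma (ν + m + 1) := by
    intro m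
    apply Real.Gamma_pos_of_pos
    have : (0:ℝ) ≤ m := Nat.cast_nonneg m
    linarith
  have hbpos : ∀ m : ℕ, 0 < b m := by
    intro m
    apply div_pos (by positivity)
    exact mul_pos (by exact_mod_cast m.factorial_pos) (hΓpos m)
  apply summable_of_ratio_norm_eventually_le (r := (1/2 : ℝ)) (by norm_num)
  rw [Filter.eventually_atTop]
  refine ⟨max 1 ⌈2 * (x/2)^2⌉₊, fun m hm => ?_⟩
  have hm1 : 1 ≤ m := le_trans (le_max_left _ _) hm
  have hmx : 2 * (x/2)^2 ≤ (m : ℝ) := by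
    calc 2 * (x/2)^2 ≤ (⌈2 * (x/2)^2⌉₊ : ℝ) := Nat.le_ceil _
      _ ≤ (m : ℝ) := by exact_mod_cast le_trans (le_max_right _ _) hm
  have hΓrec : Real.Gamma (ν + (m+1 : ℕ) + 1) = (ν + m + 1) * Real.Gamma (ν + m + 1) := by
    have hne : ν + (m:ℝ) + 1 ≠ 0 := by
      have h0 : (0:ℝ) ≤ m := Nat.cast_nonneg m
      have : (0:ℝ) < ν + m + 1 := by linarith
      exact this.ne'

    rw [show (ν + ((m:ℕ)+1 : ℕ) + 1 : ℝ) = (ν + m + 1) + 1 by push_cast; ring,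
      Real.Gamma_add_one hne]
  have hkey : b (m+1) = ((x/2)^2 / ((m+1) * (ν + m + 1))) * b m := by
    rw [hb]
    simp only
    rw [hΓrec, Nat.factorial_succ]
    have h1 : ((m+1 : ℕ) : ℝ) ≠ 0 := by positivity
    have h2 : (ν + (m:ℝ) + 1) ≠ 0 := by
      have h0 : (0:ℝ) ≤ m := Nat.cast_nonneg m
      have : (0:ℝ) < ν + m + 1 := by linarith
      exact this.ne'

    have h3 : (m.factorial : ℝ) ≠ 0 := by exact_mod_cast m.factorial_ne_zero
    have h4 : Real.Gamma (ν + m + 1) ≠ 0 := (hΓpos m).ne'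
    field_simp
    push_cast
    ring
  rw [Real.norm_eq_abs, Real.norm_eq_abs, abs_of_pos (hbpos _), abs_of_pos (hbpos _), hkey]
  have hfac : (x/2)^2 / ((m+1) * (ν + m + 1)) ≤ 1/2 := by
    have hmul : (0:ℝ) < ((m:ℝ)+1) * (ν + m + 1) := by
      have h0 : (0:ℝ) ≤ m := Nat.cast_nonneg m
      apply mul_pos <;> linarith
    rw [div_le_iff₀ hmul]
    have hge1 : (1:ℝ) ≤ ν + m + 1 := by
      have : (1:ℝ) ≤ m := by exact_mod_cast hm1
      linarith
    nlinarith [hbpos m, sq_nonneg (x/2)]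
  calc (x/2)^2 / ((m+1) * (ν + m + 1)) * b m ≤ 1/2 * b m :=
    mul_le_mul_of_nonneg_right hfac (hbpos m).le

/-- Abstract fraction identity. -/
lemma frac_aux (P S G Q A B R X : ℝ) (m : ℕ)
    (hS : S ≠ 0) (hG : G ≠ 0) (hQ : Q ≠ 0) (hA : A ≠ 0) (hB : B ≠ 0) (hR : R ≠ 0) :
    (-1:ℝ)^m * (P * (X / R)) / (B * Q)
      = P / (G * S) * ((-1:ℝ)^m * X / A * (S * A / (R * B) * G / Q)) := by
  field_simp

/-- For real `ν > -1/2` and `x > 0`, the Poisson-type integral representation of `J_ν`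
coincides with the power series `Σ_{m=0}^∞ (-1)^m (x/2)^{ν+2m} / (m! Γ(ν+m+1))`, the
series converging absolutely. -/
theorem besselJ_poisson_eq_series (ν : ℝ) (hν : -(1 / 2 : ℝ) < ν) (x : ℝ) (hx : 0 < x) :
    Summable
        (fun m : ℕ => |(-1 : ℝ) ^ m * (x / 2) ^ (ν + 2 * m) /
          ((m.factorial : ℝ) * Real.Gamma (ν + m + 1))|) ∧
    HasSum
      (fun m : ℕ => (-1 : ℝ) ^ m * (x / 2) ^ (ν + 2 * m) /
        ((m.factorial : ℝ) * Real.Gamma (ν + m + 1)))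
      ((x / 2) ^ ν / (Real.Gamma (ν + 1 / 2) * Real.Gamma (1 / 2)) *
        ∫ s in (-1 : ℝ)..1, (1 - s ^ 2) ^ (ν - 1 / 2) * Real.cos (x * s)) := by
  have hx2 : (0:ℝ) < x / 2 := by linarith
  set b : ℕ → ℝ := fun m => (x/2) ^ (2*m) / (m.factorial * Real.Gamma (ν + m + 1)) with hbdef
  have hb : Summable b := base_summable ν x hν hx
  have hΓpos : ∀ m : ℕ, 0 < Real.Gamma (ν + m + 1) := by
    intro m
    apply Real.Gamma_pos_of_pos
    have : (0:ℝ) ≤ m := Nat.cast_nonneg m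
    linarith
  have hΓv : 0 < Real.Gamma (ν + 1/2) := Real.Gamma_pos_of_pos (by linarith)
  have hsqpi : 0 < Real.sqrt Real.pi := Real.sqrt_pos.2 Real.pi_pos
  -- rpow splitting
  have hrsplit : ∀ m : ℕ, (x/2) ^ (ν + 2 * (m:ℝ)) = (x/2) ^ ν * (x/2) ^ (2*m : ℕ) := by
    intro m
    rw [Real.rpow_add hx2, ← Real.rpow_natCast (x/2) (2*m)]
    push_cast
    ring_nf
  -- Summability of absolute series
  have habs : ∀ m : ℕ, |(-1 : ℝ) ^ m * (x / 2) ^ (ν + 2 * m) /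
      ((m.factorial : ℝ) * Real.Gamma (ν + m + 1))| = (x/2) ^ ν * b m := by
    intro m
    rw [abs_div, abs_mul, abs_pow, abs_neg, abs_one, one_pow, one_mul,
      abs_of_pos (Real.rpow_pos_of_pos hx2 _),
      abs_of_pos (mul_pos (by exact_mod_cast m.factorial_pos) (hΓpos m)),
      hrsplit m, hbdef]
    simp only
    ring
  have hsummable : Summable
      (fun m : ℕ => |(-1 : ℝ) ^ m * (x / 2) ^ (ν + 2 * m) /
        ((m.factorial : ℝ) * Real.Gamma (ν + m + 1))|) := by
    refine (hb.mul_left ((x/2) ^ ν)).congr fun m => (habs m).symm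
  refine ⟨hsummable, ?_⟩
  -- the series of integrals
  set c : ℕ → ℝ := fun m => (-1)^m * x^(2*m) / (2*m).factorial with hcdef
  set f : ℕ → ℝ → ℝ := fun m s => (1 - s^2) ^ (ν - 1/2) * s ^ (2*m) with hfdef
  set F : ℕ → ℝ → ℝ := fun m s => c m * f m s with hFdef
  have hJ := fun m => poisson_moment ν hν m
  have hFint : ∀ m : ℕ, Integrable (F m) (volume.restrict (Ioo (-1:ℝ) 1)) := fun m =>
    ((hJ m).1.const_mul (c m))
  set Jval : ℕ → ℝ := fun m =>
    Real.Gamma ((m : ℝ) + 1/2) * Real.Gamma (ν + 1/2) / Real.Gamma (ν + m + 1) with hJval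
  have hnorm : ∀ m : ℕ, ∫ s in Ioo (-1:ℝ) 1, ‖F m s‖ = |c m| * Jval m := by
    intro m
    have : ∀ s ∈ Ioo (-1:ℝ) 1, ‖F m s‖ = |c m| * f m s := by
      intro s hs
      have hpos : (0:ℝ) ≤ f m s := by
        rw [hfdef]
        have h1s : (0:ℝ) ≤ 1 - s^2 := by nlinarith [hs.1, hs.2]
        exact mul_nonneg (Real.rpow_nonneg h1s _) ((even_two_mul m).pow_nonneg s)
      rw [Real.norm_eq_abs, hFdef]
      simp only
      rw [abs_mul, abs_of_nonneg hpos]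
    rw [setIntegral_congr_fun measurableSet_Ioo this, integral_const_mul, (hJ m).2, hJval]
  have hnormval : ∀ m : ℕ, |c m| * Jval m
      = (Real.sqrt Real.pi * Real.Gamma (ν + 1/2)) * b m := by
    intro m
    have hc : |c m| = x^(2*m) / (2*m).factorial := by
      rw [hcdef]
      simp only
      rw [abs_div, abs_mul, abs_pow, abs_neg, abs_one, one_pow, one_mul,
        abs_of_pos (by positivity : (0:ℝ) < x^(2*m)),
        abs_of_pos (by exact_mod_cast (2*m).factorial_pos : (0:ℝ) < ((2*m).factorial : ℝ))]
    rw [hc, hJval]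
    beta_reduce
    rw [gamma_nat_add_half_aux, hbdef]
    beta_reduce
    have h1 : ((2*m).factorial : ℝ) ≠ 0 := by exact_mod_cast (2*m).factorial_ne_zero
    have h2 : (m.factorial : ℝ) ≠ 0 := by exact_mod_cast m.factorial_ne_zero
    have h3 : Real.Gamma (ν + m + 1) ≠ 0 := (hΓpos m).ne'
    have h4 : ((4:ℝ)^m) ≠ 0 := by positivity
    have h5 : (x/2)^(2*m) = x^(2*m) / 4^m := by
      rw [div_pow]
      congr 1
      rw [show (4:ℝ) = 2^2 by norm_num, ← pow_mul]
    rw [h5]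
    field_simp
  have hnormsummable : Summable (fun m => ∫ s in Ioo (-1:ℝ) 1, ‖F m s‖) := by
    refine ((hb.mul_left (Real.sqrt Real.pi * Real.Gamma (ν + 1/2))).congr
      fun m => ?_)
    rw [← hnormval m, ← hnorm m]
  have H := MeasureTheory.hasSum_integral_of_summable_integral_norm hFint hnormsummable
  -- identify the tsum
  have htsum : ∀ s : ℝ, (∑' m, F m s) = (1 - s^2) ^ (ν - 1/2) * Real.cos (x * s) := by
    intro s
    have h := (Real.hasSum_cos (x*s)).mul_left ((1 - s^2) ^ (ν - 1/2))
    have heq : (fun m : ℕ => F m s)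
        = fun m => (1 - s^2) ^ (ν - 1/2) * ((-1)^m * (x*s)^(2*m) / (2*m).factorial) := by
      funext m
      rw [hFdef, hcdef, hfdef]
      simp only
      rw [mul_pow]
      ring
    rw [heq]
    exact h.tsum_eq
  have hIoo : (∫ s in Ioo (-1:ℝ) 1, ∑' m, F m s)
      = ∫ s in (-1 : ℝ)..1, (1 - s ^ 2) ^ (ν - 1 / 2) * Real.cos (x * s) := by
    rw [intervalIntegral.integral_of_le (by norm_num : (-1:ℝ) ≤ 1),
      MeasureTheory.integral_Ioc_eq_integral_Ioo]
    exact setIntegral_congr_fun measurableSet_Ioo fun s _ => htsum s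
  rw [hIoo] at H
  -- H : HasSum (fun m => ∫ s in Ioo (-1) 1, F m s) (interval integral)
  have hintval : ∀ m : ℕ, (∫ s in Ioo (-1:ℝ) 1, F m s) = c m * Jval m := by
    intro m
    rw [hFdef]
    simp only
    rw [integral_const_mul, (hJ m).2, hJval]
  set K : ℝ := (x / 2) ^ ν / (Real.Gamma (ν + 1 / 2) * Real.Gamma (1 / 2)) with hK
  have hterm : ∀ m : ℕ, (-1 : ℝ) ^ m * (x / 2) ^ (ν + 2 * m) /
      ((m.factorial : ℝ) * Real.Gamma (ν + m + 1)) = K * (c m * Jval m) := by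
    intro m
    rw [hK, hcdef, hJval, Real.Gamma_one_half_eq]
    beta_reduce
    rw [gamma_nat_add_half_aux]
    have h1 : ((2*m).factorial : ℝ) ≠ 0 := by exact_mod_cast (2*m).factorial_ne_zero
    have h2 : (m.factorial : ℝ) ≠ 0 := by exact_mod_cast m.factorial_ne_zero
    have h3 : Real.Gamma (ν + m + 1) ≠ 0 := (hΓpos m).ne'
    have h4 : ((4:ℝ)^m) ≠ 0 := by positivity
    have h5 : Real.Gamma (ν + 1/2) ≠ 0 := hΓv.ne'
    have h6 : Real.sqrt Real.pi ≠ 0 := hsqpi.ne'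
    rw [hrsplit m]
    have h7 : (x/2)^(2*m) = x^(2*m) / 4^m := by
      rw [div_pow]
      congr 1
      rw [show (4:ℝ) = 2^2 by norm_num, ← pow_mul]
    rw [h7]
    exact frac_aux _ _ _ _ _ _ _ _ m h6 h5 h3 h1 h2 h4
  have Hfinal : HasSum (fun m : ℕ => K * (c m * Jval m))
      (K * ∫ s in (-1 : ℝ)..1, (1 - s ^ 2) ^ (ν - 1 / 2) * Real.cos (x * s)) := by
    have heq2 : (fun m : ℕ => K * ∫ s in Ioo (-1:ℝ) 1, F m s)
        = fun m : ℕ => K * (c m * Jval m) := funext fun m => by rw [hintval m]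
    rw [← heq2]
    exact H.mul_left K
  have heq3 : (fun m : ℕ => (-1 : ℝ) ^ m * (x / 2) ^ (ν + 2 * m) /
      ((m.factorial : ℝ) * Real.Gamma (ν + m + 1)))
      = fun m : ℕ => K * (c m * Jval m) := funext hterm
  rw [heq3]
  exact Hfinal
end
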